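/- Let φ be a mollification kernel on R^{d+1} (space-time) compactly supported in time and space, and for ℓ > 0 let φ_ℓ denote its rescaling at scale ℓ. Then there is a constant C = C(φ) such that for every pair of smooth functions u and ρ of time and space, ‖(uρ) ∗ φ_ℓ − (u ∗ φ_ℓ)(ρ ∗ φ_ℓ)‖_{L^1} ≤ C ℓ^2 ( ‖∂_t u‖_{L^1} + ‖Du‖_{L^1} ) ( ‖Dρ‖_{C^0} + ‖∂_t ρ‖_{C^0} ). -/

import Mathlib

open MeasureTheory Set
open scoped ENNReal NNReal RealInnerProductSpace BigOperators

noncomputable section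

abbrev Rd (d : ℕ) := EuclideanSpace ℝ (Fin d)
/-- ℤ^d-periodicity of a function on ℝ^d (model for functions on the torus `𝕋^d`). -/
def ZPeriodic {d : ℕ} {E : Type*} (f : Rd d → E) : Prop :=
  ∀ (x : Rd d) (k : Fin d → ℤ), f (WithLp.toLp 2 (fun i => x i + (k i : ℝ))) = f x

/-- Fundamental domain `[0,1)^d` of the torus. -/
def Fund (d : ℕ) : Set (Rd d) := {x | ∀ i, x i ∈ Ico (0:ℝ) 1}

/-- The torus measure: Lebesgue measure restricted to the fundamental domain. -/
def μT (d : ℕ) : Measure (Rd d) := volume.restrict (Fund d)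

/-- The space-time measure on `ℝ × 𝕋^d`. -/
def νST (d : ℕ) : Measure (ℝ × Rd d) := (volume : Measure ℝ).prod (μT d)

/-- Space-time convolution of `F` with the kernel `K` on `ℝ^{d+1} = ℝ × ℝ^d`. -/
def conv (d : ℕ) (K F : ℝ × Rd d → ℝ) (z : ℝ × Rd d) : ℝ :=
  ∫ w : ℝ × Rd d, F (z - w) * K w

/-- The rescaled mollifier `φ_ℓ(z) = ℓ^{-(d+1)} φ(z/ℓ)`. -/
def mollifier (d : ℕ) (φ : ℝ × Rd d → ℝ) (ℓ : ℝ) (z : ℝ × Rd d) : ℝ :=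
  ℓ ^ (-(d + 1 : ℤ)) * φ (ℓ⁻¹ • z)

namespace CET


variable {d : ℕ}

abbrev Z (d : ℕ) := ℝ × Rd d

lemma ofReal_norm_eq_coe_nnnorm {E : Type*} [SeminormedAddCommGroup E] (x : E) :
    ENNReal.ofReal ‖x‖ = (‖x‖₊ : ℝ≥0∞) := ofReal_norm x

/-- embed a plain function into `Rd d` -/
def emb (c : Fin d → ℝ) : Rd d := WithLp.toLp 2 c

lemma emb_apply (c : Fin d → ℝ) (i : Fin d) : emb c i = c i := rfl

lemma add_emb_apply (x : Rd d) (c : Fin d → ℝ) (i : Fin d) : (x + emb c) i = x i + c i := rfl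

lemma measurableSet_fund : MeasurableSet (Fund d) := by
  have : Fund d = ⋂ i, (fun x : Rd d => x i) ⁻¹' Ico (0:ℝ) 1 := by
    ext x; simp [Fund, Set.mem_iInter]
  rw [this]
  exact MeasurableSet.iInter fun i =>
    ((continuous_apply i).comp (PiLp.continuous_ofLp 2 _)).measurable measurableSet_Ico

instance : SigmaFinite (μT d) := by unfold μT; infer_instance
instance : SFinite (νST d) := by unfold νST; infer_instance

lemma fund_vol_pos_ball (x : Rd d) (hx : x ∈ Fund d) {ε : ℝ} (hε : 0 < ε) :
    0 < μT d (Metric.ball x ε) := by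
  classical
  set δ : ℝ := ε / (d + 1) with hδdef
  have hδ : 0 < δ := by positivity
  set B : Set (Rd d) := {y | ∀ i, y i ∈ Ico (x i) (min (x i + δ) 1)} with hB
  have hBsub : B ⊆ Metric.ball x ε := by
    intro y hy
    have hd : dist y x < ε := by
      rw [EuclideanSpace.dist_eq]
      have hbound : ∀ i, dist (y i) (x i) ^ 2 ≤ δ ^ 2 := by
        intro i
        have h1 := (hy i).1
        have h2 := (hy i).2
        have : |y i - x i| ≤ δ := by
          rw [abs_le]
          constructor
          · linarith
          · have := lt_min_iff.mp h2
            linarith [this.1]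
        have habs : dist (y i) (x i) ≤ δ := by rwa [Real.dist_eq]
        exact pow_le_pow_left₀ dist_nonneg habs 2
      have hsum : (∑ i, dist (y i) (x i) ^ 2) ≤ (d : ℝ) * δ ^ 2 := by
        calc (∑ i, dist (y i) (x i) ^ 2) ≤ ∑ _i : Fin d, δ ^ 2 :=
              Finset.sum_le_sum fun i _ => hbound i
          _ = (d : ℝ) * δ ^ 2 := by simp [mul_comm]
      have h1 : Real.sqrt (∑ i, dist (y i) (x i) ^ 2) ≤ Real.sqrt ((d:ℝ) * δ ^ 2) :=
        Real.sqrt_le_sqrt hsum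
      have h2 : Real.sqrt ((d:ℝ) * δ ^ 2) < ε := by
        rw [Real.sqrt_lt' hε]
        have : (d : ℝ) * δ ^ 2 < (d+1)^2 * δ ^2 := by
          have h0 : (d:ℝ) < (d+1)^2 := by nlinarith [Nat.cast_nonneg (α := ℝ) d]
          have h1 : (0:ℝ) < δ ^ 2 := by positivity
          nlinarith
        calc (d : ℝ) * δ ^ 2 < (d+1)^2 * δ^2 := this
          _ = ((d+1) * δ)^2 := by ring
          _ = ε ^ 2 := by
              rw [hδdef]; field_simp
      exact lt_of_le_of_lt h1 h2
    exact Metric.mem_ball.mpr hd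
  have hBFund : B ⊆ Fund d := by
    intro y hy i
    have h1 := (hy i).1
    have h2 := (hy i).2
    have hx1 := (hx i).1
    have hx2 := (hx i).2
    constructor
    · linarith
    · exact lt_of_lt_of_le h2 (min_le_right _ _)
  -- volume of B is positive
  have hBvol : 0 < volume B := by
    have : volume B = ∏ i, volume (Ico (x i) (min (x i + δ) 1)) := by
      have hps : B = (MeasurableEquiv.toLp 2 (Fin d → ℝ)).symm ⁻¹'
          (Set.univ.pi fun i => Ico (x i) (min (x i + δ) 1)) := by
        ext y
        simp only [Set.mem_preimage, Set.mem_pi, Set.mem_univ, forall_true_left]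
        exact Iff.rfl
      rw [hps, (EuclideanSpace.volume_preserving_symm_measurableEquiv_toLp
        (Fin d)).measure_preimage
        (MeasurableSet.univ_pi fun i => measurableSet_Ico).nullMeasurableSet, volume_pi_pi]
    rw [this]
    have : ∀ i : Fin d, 0 < volume (Ico (x i) (min (x i + δ) 1)) := by
      intro i
      rw [Real.volume_Ico]
      have hx2 := (hx i).2
      have : x i < min (x i + δ) 1 := lt_min (by linarith) hx2
      exact ENNReal.ofReal_pos.mpr (by linarith)
    exact CanonicallyOrderedAdd.prod_pos.mpr fun i _ => this i
  have : 0 < volume (Metric.ball x ε ∩ Fund d) := by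
    refine lt_of_lt_of_le hBvol (measure_mono ?_)
    exact subset_inter hBsub hBFund
  rw [μT, Measure.restrict_apply measurableSet_ball]
  exact this

lemma nu_pos_of_open {U : Set (Z d)} (hU : IsOpen U) {z : Z d} (hz : z ∈ U)
    (hz2 : z.2 ∈ Fund d) : 0 < νST d U := by
  obtain ⟨ε, hε, hball⟩ := Metric.isOpen_iff.mp hU z hz
  have : Metric.ball z.1 ε ×ˢ Metric.ball z.2 ε ⊆ U := by
    refine subset_trans ?_ hball
    rw [← ball_prod_same]
  refine lt_of_lt_of_le ?_ (measure_mono this)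
  rw [νST, Measure.prod_prod]
  exact ENNReal.mul_pos (ne_of_gt (by simp [Real.volume_ball]; positivity))
    (ne_of_gt (fund_vol_pos_ball z.2 hz2 hε))





/-- pointwise enorm bound by the L^∞ norm, for continuous spatially periodic functions -/
lemma enorm_le_eLpNormTop {E : Type*} [NormedAddCommGroup E] {f : Z d → E} (hf : Continuous f)
    (hper : ∀ (z : Z d) (k : Fin d → ℤ), f (z.1, WithLp.toLp 2 (fun i => z.2 i + (k i : ℝ))) = f z) (z : Z d) :
    (‖f z‖₊ : ℝ≥0∞) ≤ eLpNorm f ⊤ (νST d) := by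
  set y : Rd d := emb fun i => Int.fract (z.2 i) with hy
  have hrep : f z = f (z.1, y) := by
    have := hper (z.1, y) (fun i => ⌊z.2 i⌋)
    simp only at this
    rw [← this]
    congr 1
    refine Prod.ext rfl ?_
    ext i
    show z.2 i = Int.fract (z.2 i) + (⌊z.2 i⌋ : ℝ)
    rw [Int.fract_add_floor]
  have hyF : y ∈ Fund d := fun i => ⟨Int.fract_nonneg _, Int.fract_lt_one _⟩
  rw [hrep]
  by_contra hlt
  push_neg at hlt
  set c := eLpNorm f ⊤ (νST d) with hc
  have hae : ∀ᵐ w ∂(νST d), (‖f w‖₊ : ℝ≥0∞) ≤ c := by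
    rw [hc, eLpNorm_exponent_top, eLpNormEssSup]
    exact ae_le_essSup (by isBoundedDefault)
  have hU : IsOpen {w : Z d | c < (‖f w‖₊ : ℝ≥0∞)} :=
    isOpen_Ioi.preimage (ENNReal.continuous_coe.comp (continuous_nnnorm.comp hf))
  have hpos : 0 < νST d {w : Z d | c < (‖f w‖₊ : ℝ≥0∞)} :=
    nu_pos_of_open hU hlt hyF
  have : νST d {w : Z d | c < (‖f w‖₊ : ℝ≥0∞)} = 0 := by
    have : {w : Z d | c < (‖f w‖₊ : ℝ≥0∞)} = {w : Z d | ¬ (‖f w‖₊ : ℝ≥0∞) ≤ c} := by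
      ext w; simp [not_le]
    rw [this]
    exact hae
  exact absurd this (ne_of_gt hpos)

variable {u : Z d → ℝ}

lemma hasFDeriv (hu : ContDiff ℝ (⊤ : ℕ∞) u) (z : Z d) : HasFDerivAt u (fderiv ℝ u z) z :=
  (hu.differentiable (by simp) z).hasFDerivAt

lemma partial_t_hasDeriv (hu : ContDiff ℝ (⊤ : ℕ∞) u) (z : Z d) :
    HasDerivAt (fun s => u (s, z.2)) (fderiv ℝ u z (1, 0)) z.1 := by
  have h1 : HasDerivAt (fun s : ℝ => ((s, z.2) : Z d)) ((1:ℝ), (0:Rd d)) z.1 :=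
    (hasDerivAt_id z.1).prodMk (hasDerivAt_const z.1 z.2)
  have := (hasFDeriv hu (z.1, z.2)).comp_hasDerivAt z.1 h1
  simpa [Function.comp_def] using this

lemma partial_t_eq (hu : ContDiff ℝ (⊤ : ℕ∞) u) (z : Z d) :
    deriv (fun s => u (s, z.2)) z.1 = fderiv ℝ u z (1, 0) :=
  (partial_t_hasDeriv hu z).deriv

lemma partial_x_hasFDeriv (hu : ContDiff ℝ (⊤ : ℕ∞) u) (z : Z d) :
    HasFDerivAt (fun y => u (z.1, y))
      ((fderiv ℝ u z).comp (ContinuousLinearMap.inr ℝ ℝ (Rd d))) z.2 := by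
  have h1 : HasFDerivAt (fun y : Rd d => ((z.1, y) : Z d))
      (ContinuousLinearMap.inr ℝ ℝ (Rd d)) z.2 := hasFDerivAt_prodMk_right z.1 z.2
  have := (hasFDeriv hu (z.1, z.2)).comp z.2 h1
  simpa [Function.comp_def] using this

lemma partial_x_eq (hu : ContDiff ℝ (⊤ : ℕ∞) u) (z : Z d) :
    fderiv ℝ (fun y => u (z.1, y)) z.2
      = (fderiv ℝ u z).comp (ContinuousLinearMap.inr ℝ ℝ (Rd d)) :=
  (partial_x_hasFDeriv hu z).fderiv

lemma norm_fderiv_split (hu : ContDiff ℝ (⊤ : ℕ∞) u) (z : Z d) :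
    ‖fderiv ℝ u z‖ ≤ ‖deriv (fun s => u (s, z.2)) z.1‖
      + ‖fderiv ℝ (fun y => u (z.1, y)) z.2‖ := by
  rw [partial_t_eq hu z, partial_x_eq hu z]
  set L := fderiv ℝ u z
  refine ContinuousLinearMap.opNorm_le_bound _ (by positivity) fun v => ?_
  have hv : L v = v.1 • L (1, 0) + (L.comp (ContinuousLinearMap.inr ℝ ℝ (Rd d))) v.2 := by
    have : v = v.1 • ((1:ℝ), (0:Rd d)) + ((0:ℝ), v.2) := by
      refine Prod.ext ?_ ?_ <;> simp
    calc L v = L (v.1 • ((1:ℝ), (0:Rd d)) + ((0:ℝ), v.2)) := by rw [← this]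
      _ = v.1 • L (1, 0) + L ((0:ℝ), v.2) := by rw [map_add]; rw [_root_.map_smul]
      _ = _ := by simp [ContinuousLinearMap.comp_apply]
  rw [hv]
  calc ‖v.1 • L (1, 0) + (L.comp (ContinuousLinearMap.inr ℝ ℝ (Rd d))) v.2‖
      ≤ ‖v.1 • L (1, 0)‖ + ‖(L.comp (ContinuousLinearMap.inr ℝ ℝ (Rd d))) v.2‖ := norm_add_le _ _
    _ ≤ ‖v.1‖ * ‖L (1, 0)‖ + ‖L.comp (ContinuousLinearMap.inr ℝ ℝ (Rd d))‖ * ‖v.2‖ := by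
        rw [norm_smul]
        exact add_le_add le_rfl (ContinuousLinearMap.le_opNorm _ _)
    _ ≤ ‖v‖ * ‖L (1, 0)‖ + ‖L.comp (ContinuousLinearMap.inr ℝ ℝ (Rd d))‖ * ‖v‖ := by
        have h1 : ‖v.1‖ ≤ ‖v‖ := norm_fst_le v
        have h2 : ‖v.2‖ ≤ ‖v‖ := norm_snd_le v
        have h3 : (0:ℝ) ≤ ‖L (1,0)‖ := norm_nonneg _
        have h4 : (0:ℝ) ≤ ‖L.comp (ContinuousLinearMap.inr ℝ ℝ (Rd d))‖ := norm_nonneg _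
        nlinarith [norm_nonneg v]
    _ = (‖L (1, 0)‖ + ‖L.comp (ContinuousLinearMap.inr ℝ ℝ (Rd d))‖) * ‖v‖ := by ring

/-- translation invariance of `u` from spatial periodicity -/
lemma comp_add_eq (hper : ∀ t, ZPeriodic fun x => u (t, x)) (k : Fin d → ℤ) :
    (fun w : Z d => u (w + ((0:ℝ), emb fun i => (k i : ℝ)))) = u := by
  funext w
  have h1 : w + ((0:ℝ), emb fun i => (k i : ℝ)) = (w.1, WithLp.toLp 2 (fun i => w.2 i + (k i : ℝ))) := by
    refine Prod.ext (by simp) ?_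
    ext i
    show w.2 i + (k i : ℝ) = w.2 i + (k i : ℝ)
    rfl
  rw [h1]
  exact hper w.1 w.2 k

lemma fderiv_periodic (hu : ContDiff ℝ (⊤ : ℕ∞) u) (hper : ∀ t, ZPeriodic fun x => u (t, x))
    (z : Z d) (k : Fin d → ℤ) :
    fderiv ℝ u (z.1, WithLp.toLp 2 (fun i => z.2 i + (k i : ℝ))) = fderiv ℝ u z := by
  set c : Z d := ((0:ℝ), emb fun i => (k i : ℝ)) with hc
  have h1 : ((z.1, WithLp.toLp 2 (fun i => z.2 i + (k i : ℝ))) : Z d) = z + c := by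
    refine Prod.ext (by simp [hc]) ?_
    ext i
    show z.2 i + (k i : ℝ) = z.2 i + (k i : ℝ)
    rfl
  rw [h1]
  have h2 : HasFDerivAt (fun y : Z d => y + c) (ContinuousLinearMap.id ℝ (Z d)) z :=
    (hasFDerivAt_id z).add_const c
  have h3 := (hasFDeriv hu (z + c)).comp z h2
  have h4 : (fun y : Z d => u (y + c)) = u := comp_add_eq hper k
  have h3' : HasFDerivAt (fun y : Z d => u (y + c)) (fderiv ℝ u (z + c)) z := by
    simpa [Function.comp_def] using h3
  rw [h4] at h3'
  exact h3'.fderiv.symm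





lemma image_add_right_eq (s : Set (Rd d)) (r : Rd d) :
    (fun x => x + r) '' s = (fun x => x - r) ⁻¹' s := by
  ext y
  constructor
  · rintro ⟨x, hx, rfl⟩; simpa using hx
  · intro hy; exact ⟨y - r, hy, by simp⟩

lemma measurable_add_right_Rd (r : Rd d) : Measurable (fun x : Rd d => x + r) :=
  (continuous_id.add continuous_const).measurable

/-- change of variables for translation on a measurable set -/
lemma lint_shift {s : Set (Rd d)} (hs : MeasurableSet s) (g : Rd d → ℝ≥0∞) (r : Rd d) :
    ∫⁻ x in s, g (x + r) = ∫⁻ y in (fun x => x + r) '' s, g y := by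
  have himg : MeasurableSet ((fun x : Rd d => x + r) '' s) := by
    rw [image_add_right_eq]
    exact ((continuous_id.sub continuous_const).measurable) hs
  have key : ∀ x, s.indicator (fun x => g (x + r)) x
      = ((fun x => x + r) '' s).indicator g (x + r) := by
    intro x
    by_cases hx : x ∈ s
    · rw [Set.indicator_of_mem hx, Set.indicator_of_mem (Set.mem_image_of_mem _ hx)]
    · rw [Set.indicator_of_notMem hx, Set.indicator_of_notMem]
      rintro ⟨x', hx', hxx⟩
      exact hx ((add_left_injective r hxx) ▸ hx')
  rw [← lintegral_indicator hs _, ← lintegral_indicator himg _]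
  calc ∫⁻ x, s.indicator (fun x => g (x + r)) x
      = ∫⁻ x, ((fun x => x + r) '' s).indicator g (x + r) := by
        exact lintegral_congr key
    _ = ∫⁻ y, ((fun x => x + r) '' s).indicator g y :=
        lintegral_add_right_eq_self _ r

/-- fundamental torus shift estimate -/
lemma lintegral_fund_shift_le (g : Rd d → ℝ≥0∞)
    (hper : ∀ (x : Rd d) (k : Fin d → ℤ), g (x + emb fun i => (k i : ℝ)) = g x)
    (a : Rd d) :
    ∫⁻ x in Fund d, g (x + a) ≤ 2 ^ d * ∫⁻ x in Fund d, g x := by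
  classical
  set r : Rd d := emb fun i => Int.fract (a i) with hr
  set k : Fin d → ℤ := fun i => ⌊a i⌋ with hk
  have hsplit : ∀ x : Rd d, x + a = (x + r) + emb fun i => ((k i : ℝ)) := by
    intro x
    ext i
    show x i + a i = (x i + Int.fract (a i)) + (⌊a i⌋ : ℝ)
    have := Int.fract_add_floor (a i)
    linarith
  have h1 : ∫⁻ x in Fund d, g (x + a) = ∫⁻ x in Fund d, g (x + r) := by
    refine lintegral_congr fun x => ?_
    rw [hsplit x, hper (x + r) k]
  rw [h1, lint_shift measurableSet_fund g r]
  -- the image is contained in the box [0,2)^d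
  set Box2 : Set (Rd d) := {x | ∀ i, x i ∈ Ico (0:ℝ) 2} with hBox
  have hsub : (fun x => x + r) '' Fund d ⊆ Box2 := by
    rintro y ⟨x, hx, rfl⟩ i
    have h1 := (hx i).1
    have h2 := (hx i).2
    have h3 : (0:ℝ) ≤ Int.fract (a i) := Int.fract_nonneg _
    have h4 : Int.fract (a i) < 1 := Int.fract_lt_one _
    show 0 ≤ x i + Int.fract (a i) ∧ x i + Int.fract (a i) < 2
    constructor <;> [linarith; linarith]
  -- Box2 is covered by 2^d integer translates of Fund
  have hcover : Box2 ⊆ ⋃ σ : Fin d → Bool,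
      (fun x => x + emb fun i => (if σ i then (1:ℝ) else 0)) '' Fund d := by
    intro y hy
    refine Set.mem_iUnion.mpr ⟨fun i => decide ((1:ℝ) ≤ y i), ?_⟩
    refine ⟨y - emb fun i => (if decide ((1:ℝ) ≤ y i) then (1:ℝ) else 0), ?_, by simp⟩
    intro i
    have h1 := (hy i).1
    have h2 := (hy i).2
    show y i - (if decide ((1:ℝ) ≤ y i) then (1:ℝ) else 0) ∈ Ico (0:ℝ) 1
    by_cases hc : (1:ℝ) ≤ y i
    · simp only [hc, decide_eq_true_eq, if_pos]
      constructor <;> [linarith; linarith]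
    · push_neg at hc
      simp only [decide_eq_true_eq, hc.not_ge, if_neg, not_le]
      constructor
      · simpa using h1
      · simpa using hc
  calc ∫⁻ y in (fun x => x + r) '' Fund d, g y
      ≤ ∫⁻ y in ⋃ σ : Fin d → Bool,
          (fun x => x + emb fun i => (if σ i then (1:ℝ) else 0)) '' Fund d, g y :=
        lintegral_mono_set (subset_trans hsub hcover)
    _ ≤ ∑' σ : Fin d → Bool, ∫⁻ y in
          (fun x => x + emb fun i => (if σ i then (1:ℝ) else 0)) '' Fund d, g y :=
        lintegral_iUnion_le _ _
    _ = ∑' σ : Fin d → Bool, ∫⁻ x in Fund d, g x := by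
        refine tsum_congr fun σ => ?_
        rw [← lint_shift measurableSet_fund g _]
        refine lintegral_congr fun x => ?_
        have : (emb fun i => (if σ i then (1:ℝ) else 0))
            = emb fun i => (((if σ i then (1:ℤ) else 0) : ℤ) : ℝ) := by
          ext i; by_cases h : σ i <;> simp [h, emb]
        rw [this, hper x fun i => (if σ i then (1:ℤ) else 0)]
    _ = 2 ^ d * ∫⁻ x in Fund d, g x := by
        rw [tsum_fintype]
        simp [Finset.card_univ, mul_comm]

/-- full space-time translation estimate -/
lemma lintegral_nu_shift_le (G : Z d → ℝ≥0∞) (hG : Measurable G)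
    (hper : ∀ (z : Z d) (k : Fin d → ℤ), G (z + ((0:ℝ), emb fun i => (k i : ℝ))) = G z)
    (c : Z d) :
    ∫⁻ z, G (z + c) ∂(νST d) ≤ 2 ^ d * ∫⁻ z, G z ∂(νST d) := by
  haveI : SigmaFinite (μT d) := by unfold μT; infer_instance
  unfold νST
  have hmeas : ∀ c' : Z d, Measurable fun z : Z d => G (z + c') := fun c' =>
    hG.comp ((measurable_id.add_const c'))
  rw [lintegral_prod _ (hmeas c).aemeasurable, lintegral_prod _ hG.aemeasurable]
  have inner : ∀ t : ℝ, ∫⁻ x in Fund d, G (t + c.1, x + c.2)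
      ≤ 2 ^ d * ∫⁻ x in Fund d, G (t + c.1, x) := by
    intro t
    refine lintegral_fund_shift_le (fun x => G (t + c.1, x)) ?_ c.2
    intro x k
    have := hper (t + c.1, x) k
    simpa using this
  calc ∫⁻ t, ∫⁻ x, G ((t, x) + c) ∂(μT d)
      ≤ ∫⁻ t, 2 ^ d * ∫⁻ x in Fund d, G (t + c.1, x) := by
        refine lintegral_mono fun t => ?_
        exact inner t
    _ = 2 ^ d * ∫⁻ t, ∫⁻ x in Fund d, G (t + c.1, x) := by
        rw [lintegral_const_mul]
        have hm : Measurable fun z : Z d => G (z + (c.1, (0:Rd d))) := hmeas _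
        have := hm.lintegral_prod_right' (ν := μT d)
        convert this using 2 with t
        · rfl
        refine lintegral_congr fun x => ?_
        congr 1
        exact Prod.ext rfl (by simp)
    _ = 2 ^ d * ∫⁻ t, ∫⁻ x in Fund d, G (t, x) := by
        congr 1
        exact lintegral_add_right_eq_self (fun t => ∫⁻ x in Fund d, G (t, x)) c.1
  





variable {u ρ : Z d → ℝ}

lemma cont_Dt (hu : ContDiff ℝ (⊤ : ℕ∞) u) :
    Continuous fun z : Z d => deriv (fun s => u (s, z.2)) z.1 := by
  have h : (fun z : Z d => deriv (fun s => u (s, z.2)) z.1)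
      = fun z : Z d => fderiv ℝ u z (1, 0) := funext fun z => partial_t_eq hu z
  rw [h]
  exact (hu.continuous_fderiv (by simp)).clm_apply continuous_const

lemma cont_Dx (hu : ContDiff ℝ (⊤ : ℕ∞) u) :
    Continuous fun z : Z d => fderiv ℝ (fun y => u (z.1, y)) z.2 := by
  have h : (fun z : Z d => fderiv ℝ (fun y => u (z.1, y)) z.2)
      = fun z : Z d => (fderiv ℝ u z).comp (ContinuousLinearMap.inr ℝ ℝ (Rd d)) :=
    funext fun z => partial_x_eq hu z
  rw [h]
  exact (hu.continuous_fderiv (by simp)).clm_comp continuous_const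

lemma per_Dt (hu : ContDiff ℝ (⊤ : ℕ∞) u) (hper : ∀ t, ZPeriodic fun x => u (t, x)) :
    ∀ (z : Z d) (k : Fin d → ℤ),
      deriv (fun s => u (s, (WithLp.toLp 2 (fun i => z.2 i + (k i : ℝ)) : Rd d))) z.1
        = deriv (fun s => u (s, z.2)) z.1 := by
  intro z k
  have h1 := partial_t_eq hu ((z.1, WithLp.toLp 2 (fun i => z.2 i + (k i : ℝ))) : Z d)
  have h2 := partial_t_eq hu z
  simp only at h1
  rw [h1, h2, fderiv_periodic hu hper z k]

lemma per_Dx (hu : ContDiff ℝ (⊤ : ℕ∞) u) (hper : ∀ t, ZPeriodic fun x => u (t, x)) :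
    ∀ (z : Z d) (k : Fin d → ℤ),
      fderiv ℝ (fun y => u (z.1, y)) (WithLp.toLp 2 (fun i => z.2 i + (k i : ℝ)))
        = fderiv ℝ (fun y => u (z.1, y)) z.2 := by
  intro z k
  have h1 := partial_x_eq hu ((z.1, WithLp.toLp 2 (fun i => z.2 i + (k i : ℝ))) : Z d)
  have h2 := partial_x_eq hu z
  simp only at h1
  rw [h1, h2, fderiv_periodic hu hper z k]

/-- Lipschitz estimate in terms of the `L^∞` norms of the partial derivatives. -/
lemma lip_bound (hρ : ContDiff ℝ (⊤ : ℕ∞) ρ) (hper : ∀ t, ZPeriodic fun x => ρ (t, x)) (a b : Z d) :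
    (‖ρ a - ρ b‖₊ : ℝ≥0∞) ≤
      (eLpNorm (fun z : Z d => fderiv ℝ (fun y => ρ (z.1, y)) z.2) ⊤ (νST d)
        + eLpNorm (fun z : Z d => deriv (fun s => ρ (s, z.2)) z.1) ⊤ (νST d))
        * (‖a - b‖₊ : ℝ≥0∞) := by
  set Mx := eLpNorm (fun z : Z d => fderiv ℝ (fun y => ρ (z.1, y)) z.2) ⊤ (νST d) with hMx
  set Mt := eLpNorm (fun z : Z d => deriv (fun s => ρ (s, z.2)) z.1) ⊤ (νST d) with hMt
  rcases eq_or_ne a b with rfl | hab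
  · simp
  rcases eq_or_ne Mx ⊤ with hx | hx
  · rw [hx]
    have : (‖a - b‖₊ : ℝ≥0∞) ≠ 0 := by
      simp only [ne_eq, ENNReal.coe_eq_zero, nnnorm_eq_zero, sub_eq_zero]
      exact hab
    have htop : (⊤ + Mt : ℝ≥0∞) = ⊤ := by simp
    rw [htop, ENNReal.top_mul this]
    exact le_top
  rcases eq_or_ne Mt ⊤ with ht | ht
  · rw [ht]
    have : (‖a - b‖₊ : ℝ≥0∞) ≠ 0 := by
      simp only [ne_eq, ENNReal.coe_eq_zero, nnnorm_eq_zero, sub_eq_zero]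
      exact hab
    have htop : (Mx + ⊤ : ℝ≥0∞) = ⊤ := by simp
    rw [htop, ENNReal.top_mul this]
    exact le_top
  -- both finite: pointwise bounds
  have hboundx : ∀ z : Z d, ‖fderiv ℝ (fun y => ρ (z.1, y)) z.2‖ ≤ Mx.toReal := by
    intro z
    have h := enorm_le_eLpNormTop (f := fun z : Z d => fderiv ℝ (fun y => ρ (z.1, y)) z.2)
      (cont_Dx hρ) ?_ z
    · rw [← hMx] at h
      have := ENNReal.toReal_mono hx h
      simpa [ENNReal.coe_toReal] using this
    · intro z k
      exact per_Dx hρ hper z k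
  have hboundt : ∀ z : Z d, ‖deriv (fun s => ρ (s, z.2)) z.1‖ ≤ Mt.toReal := by
    intro z
    have h := enorm_le_eLpNormTop (f := fun z : Z d => deriv (fun s => ρ (s, z.2)) z.1)
      (cont_Dt hρ) ?_ z
    · rw [← hMt] at h
      have := ENNReal.toReal_mono ht h
      simpa [ENNReal.coe_toReal] using this
    · intro z k
      exact per_Dt hρ hper z k
  have hfd : ∀ z : Z d, ‖fderiv ℝ ρ z‖ ≤ Mx.toReal + Mt.toReal := by
    intro z
    calc ‖fderiv ℝ ρ z‖ ≤ ‖deriv (fun s => ρ (s, z.2)) z.1‖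
          + ‖fderiv ℝ (fun y => ρ (z.1, y)) z.2‖ := norm_fderiv_split hρ z
      _ ≤ Mt.toReal + Mx.toReal := add_le_add (hboundt z) (hboundx z)
      _ = Mx.toReal + Mt.toReal := by ring
  have hmean : ‖ρ a - ρ b‖ ≤ (Mx.toReal + Mt.toReal) * ‖a - b‖ :=
    Convex.norm_image_sub_le_of_norm_fderiv_le
      (fun x _ => hρ.differentiable (by simp) x)
      (fun x _ => hfd x) convex_univ (Set.mem_univ b) (Set.mem_univ a)
  calc (‖ρ a - ρ b‖₊ : ℝ≥0∞) = ENNReal.ofReal ‖ρ a - ρ b‖ := (ofReal_norm_eq_coe_nnnorm _).symm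
    _ ≤ ENNReal.ofReal ((Mx.toReal + Mt.toReal) * ‖a - b‖) := ENNReal.ofReal_le_ofReal hmean
    _ = ENNReal.ofReal (Mx.toReal + Mt.toReal) * ENNReal.ofReal ‖a - b‖ := by
        rw [ENNReal.ofReal_mul (by positivity)]
    _ = (Mx + Mt) * (‖a - b‖₊ : ℝ≥0∞) := by
        rw [ofReal_norm_eq_coe_nnnorm, ENNReal.ofReal_add ENNReal.toReal_nonneg
          ENNReal.toReal_nonneg, ENNReal.ofReal_toReal hx, ENNReal.ofReal_toReal ht]

/-- L¹ bound for shifted differences. -/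
lemma shift_diff_bound (hu : ContDiff ℝ (⊤ : ℕ∞) u) (hper : ∀ t, ZPeriodic fun x => u (t, x))
    (w w' : Z d) :
    ∫⁻ z, (‖u (z - w) - u (z - w')‖₊ : ℝ≥0∞) ∂(νST d)
      ≤ 2 ^ d * (eLpNorm (fun z : Z d => deriv (fun s => u (s, z.2)) z.1) 1 (νST d)
          + eLpNorm (fun z : Z d => fderiv ℝ (fun y => u (z.1, y)) z.2) 1 (νST d))
        * (‖w - w'‖₊ : ℝ≥0∞) := by
  haveI : SigmaFinite (μT d) := by unfold μT; infer_instance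
  haveI : SFinite (νST d) := by unfold νST; infer_instance
  set v : Z d := w' - w with hv
  set G : Z d → ℝ≥0∞ := fun ζ => (‖deriv (fun s => u (s, ζ.2)) ζ.1‖₊ : ℝ≥0∞)
      + (‖fderiv ℝ (fun y => u (ζ.1, y)) ζ.2‖₊ : ℝ≥0∞) with hG
  have hGmeas : Measurable G := by
    apply Measurable.fun_add
    · exact (ENNReal.continuous_coe.comp (continuous_nnnorm.comp (cont_Dt hu))).measurable
    · exact (ENNReal.continuous_coe.comp (continuous_nnnorm.comp (cont_Dx hu))).measurable
  have hGper : ∀ (z : Z d) (k : Fin d → ℤ), G (z + ((0:ℝ), emb fun i => (k i : ℝ))) = G z := by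
    intro z k
    have h1 : z + ((0:ℝ), emb fun i => (k i : ℝ)) = ((z.1, WithLp.toLp 2 (fun i => z.2 i + (k i : ℝ))) : Z d) := by
      refine Prod.ext (by simp) ?_
      ext i
      show z.2 i + (k i : ℝ) = z.2 i + (k i : ℝ)
      rfl
    rw [h1, hG]
    simp only
    rw [per_Dt hu hper z k, per_Dx hu hper z k]
  have hGenorm : ∀ ζ : Z d, (‖fderiv ℝ u ζ‖₊ : ℝ≥0∞) ≤ G ζ := by
    intro ζ
    rw [← ofReal_norm_eq_coe_nnnorm]
    calc ENNReal.ofReal ‖fderiv ℝ u ζ‖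
        ≤ ENNReal.ofReal (‖deriv (fun s => u (s, ζ.2)) ζ.1‖
            + ‖fderiv ℝ (fun y => u (ζ.1, y)) ζ.2‖) :=
          ENNReal.ofReal_le_ofReal (norm_fderiv_split hu ζ)
      _ = G ζ := by
          rw [ENNReal.ofReal_add (norm_nonneg _) (norm_nonneg _),
            ofReal_norm_eq_coe_nnnorm, ofReal_norm_eq_coe_nnnorm]
  -- pointwise FTC bound
  have hpt : ∀ z : Z d, (‖u (z - w) - u (z - w')‖₊ : ℝ≥0∞)
      ≤ (∫⁻ s in Ioc (0:ℝ) 1, G (z + (-w' + s • v))) * (‖w - w'‖₊ : ℝ≥0∞) := by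
    intro z
    have hpath : ∀ s : ℝ, HasDerivAt (fun s : ℝ => (z - w') + s • v) v s := fun s => by
      simpa using ((hasDerivAt_id s).smul_const v).const_add (z - w')
    have hg : ∀ s : ℝ, HasDerivAt (fun s : ℝ => u ((z - w') + s • v))
        ((fderiv ℝ u ((z - w') + s • v)) v) s := fun s =>
      ((hu.differentiable (by simp) ((z - w') + s • v)).hasFDerivAt).comp_hasDerivAt s (hpath s)
    have hcont : Continuous fun s : ℝ => (fderiv ℝ u ((z - w') + s • v)) v := by
      refine Continuous.clm_apply ?_ continuous_const
      exact (hu.continuous_fderiv (by simp)).comp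
        (continuous_const.add (continuous_id.smul continuous_const))
    have hint : ∫ s in (0:ℝ)..1, (fderiv ℝ u ((z - w') + s • v)) v
        = u ((z - w') + (1:ℝ) • v) - u ((z - w') + (0:ℝ) • v) :=
      intervalIntegral.integral_eq_sub_of_hasDerivAt (fun s _ => hg s)
        (hcont.intervalIntegrable 0 1)
    have he1 : (z - w') + (1:ℝ) • v = z - w := by rw [hv]; module
    have he0 : (z - w') + (0:ℝ) • v = z - w' := by simp
    rw [he1, he0] at hint
    rw [← hint, intervalIntegral.integral_of_le (by norm_num : (0:ℝ) ≤ 1)]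
    calc (‖∫ s in Ioc (0:ℝ) 1, (fderiv ℝ u ((z - w') + s • v)) v‖₊ : ℝ≥0∞)
        ≤ ∫⁻ s in Ioc (0:ℝ) 1, (‖(fderiv ℝ u ((z - w') + s • v)) v‖₊ : ℝ≥0∞) :=
          enorm_integral_le_lintegral_enorm _
      _ ≤ ∫⁻ s in Ioc (0:ℝ) 1, G (z + (-w' + s • v)) * (‖v‖₊ : ℝ≥0∞) := by
          refine lintegral_mono fun s => ?_
          have h1 : (‖(fderiv ℝ u ((z - w') + s • v)) v‖₊ : ℝ≥0∞)
              ≤ (‖fderiv ℝ u ((z - w') + s • v)‖₊ : ℝ≥0∞) * ‖v‖₊ := by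
            rw [← ENNReal.coe_mul]
            exact ENNReal.coe_mono (ContinuousLinearMap.le_opNNNorm _ _)
          refine h1.trans ?_
          have h2 : (z - w') + s • v = z + (-w' + s • v) := by module
          rw [← h2]
          exact mul_le_mul_left (hGenorm _) _
      _ = (∫⁻ s in Ioc (0:ℝ) 1, G (z + (-w' + s • v))) * (‖v‖₊ : ℝ≥0∞) :=
          lintegral_mul_const' _ _ ENNReal.coe_ne_top
      _ = (∫⁻ s in Ioc (0:ℝ) 1, G (z + (-w' + s • v))) * (‖w - w'‖₊ : ℝ≥0∞) := by
          rw [show ‖w' - w‖₊ = ‖w - w'‖₊ by rw [← neg_sub w w', nnnorm_neg]]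
  calc ∫⁻ z, (‖u (z - w) - u (z - w')‖₊ : ℝ≥0∞) ∂(νST d)
      ≤ ∫⁻ z, (∫⁻ s in Ioc (0:ℝ) 1, G (z + (-w' + s • v))) * (‖w - w'‖₊ : ℝ≥0∞) ∂(νST d) :=
        lintegral_mono hpt
    _ = (∫⁻ z, ∫⁻ s in Ioc (0:ℝ) 1, G (z + (-w' + s • v)) ∂volume ∂(νST d))
          * (‖w - w'‖₊ : ℝ≥0∞) := lintegral_mul_const' _ _ ENNReal.coe_ne_top
    _ = (∫⁻ s in Ioc (0:ℝ) 1, ∫⁻ z, G (z + (-w' + s • v)) ∂(νST d) ∂volume)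
          * (‖w - w'‖₊ : ℝ≥0∞) := by
        congr 1
        refine lintegral_lintegral_swap ?_
        apply Measurable.aemeasurable
        exact hGmeas.comp
          ((continuous_fst.add (continuous_const.add (continuous_snd.smul continuous_const))).measurable)
    _ ≤ (∫⁻ s in Ioc (0:ℝ) 1, 2 ^ d * ∫⁻ z, G z ∂(νST d) ∂volume)
          * (‖w - w'‖₊ : ℝ≥0∞) := by
        refine mul_le_mul_left (lintegral_mono fun s => ?_) _
        exact lintegral_nu_shift_le G hGmeas hGper _
    _ = 2 ^ d * (∫⁻ z, G z ∂(νST d)) * (‖w - w'‖₊ : ℝ≥0∞) := by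
        rw [setLIntegral_const, Real.volume_Ioc]
        norm_num
    _ = 2 ^ d * (eLpNorm (fun z : Z d => deriv (fun s => u (s, z.2)) z.1) 1 (νST d)
          + eLpNorm (fun z : Z d => fderiv ℝ (fun y => u (z.1, y)) z.2) 1 (νST d))
          * (‖w - w'‖₊ : ℝ≥0∞) := by
        congr 2
        rw [hG, lintegral_add_left]
        · rw [eLpNorm_one_eq_lintegral_enorm, eLpNorm_one_eq_lintegral_enorm]
          rfl
        · exact (ENNReal.continuous_coe.comp (continuous_nnnorm.comp (cont_Dt hu))).measurable





instance volume_Z_haar : (volume : Measure (Z d)).IsAddHaarMeasure :=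
  inferInstanceAs (((volume : Measure ℝ).prod (volume : Measure (Rd d))).IsAddHaarMeasure)

lemma finrank_Z : Module.finrank ℝ (Z d) = d + 1 := by
  rw [Module.finrank_prod, finrank_euclideanSpace_fin, Module.finrank_self]
  ring

lemma zpow_neg_coe {ℓ : ℝ} (hℓ : 0 < ℓ) : ℓ ^ (-(d + 1 : ℤ)) = (ℓ ^ (d + 1))⁻¹ := by
  have h1 : (-(d + 1 : ℤ)) = -((d + 1 : ℕ) : ℤ) := by push_cast; ring
  rw [h1, zpow_neg, zpow_natCast]

variable {φ : Z d → ℝ}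

lemma mollifier_continuous (hφ : Continuous φ) {ℓ : ℝ} :
    Continuous (mollifier d φ ℓ) :=
  continuous_const.mul (hφ.comp (continuous_const_smul _))

lemma mollifier_compactSupport (hφ : HasCompactSupport φ) {ℓ : ℝ} (hℓ : 0 < ℓ) :
    HasCompactSupport (mollifier d φ ℓ) := by
  have h1 : HasCompactSupport fun z : Z d => φ (ℓ⁻¹ • z) :=
    hφ.comp_smul (inv_ne_zero hℓ.ne')
  exact h1.mul_left

lemma integral_comp_inv_smul (h : Z d → ℝ) {ℓ : ℝ} (hℓ : 0 < ℓ) :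
    ∫ w : Z d, h (ℓ⁻¹ • w) = ℓ ^ (d + 1) * ∫ v, h v := by
  rw [Measure.integral_comp_smul (volume : Measure (Z d)) h ℓ⁻¹]
  rw [finrank_Z]
  rw [abs_of_pos (by positivity), smul_eq_mul]
  rw [inv_pow, inv_inv]

lemma mollifier_integral (hφ : Continuous φ) {ℓ : ℝ} (hℓ : 0 < ℓ)
    (hφ1 : ∫ v, φ v = 1) : ∫ w, mollifier d φ ℓ w = 1 := by
  unfold mollifier
  rw [integral_const_mul, integral_comp_inv_smul φ hℓ, hφ1, zpow_neg_coe hℓ]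
  field_simp

lemma mollifier_moment (hφ : Continuous φ) (hφs : HasCompactSupport φ) {ℓ : ℝ} (hℓ : 0 < ℓ)
    (m : ℕ) :
    ∫ w : Z d, ‖w‖ ^ m * |mollifier d φ ℓ w|
      = ℓ ^ m * ∫ v : Z d, ‖v‖ ^ m * |φ v| := by
  have key : ∀ w : Z d, ‖w‖ ^ m * |mollifier d φ ℓ w|
      = (ℓ ^ (d+1))⁻¹ * ((fun v => ‖ℓ • v‖ ^ m * |φ v|) (ℓ⁻¹ • w)) := by
    intro w
    unfold mollifier
    rw [abs_mul, zpow_neg_coe hℓ, abs_of_pos (by positivity)]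
    simp only
    rw [smul_inv_smul₀ hℓ.ne']
    ring
  rw [integral_congr_ae (Filter.Eventually.of_forall key), integral_const_mul,
    integral_comp_inv_smul (fun v => ‖ℓ • v‖ ^ m * |φ v|) hℓ]
  have : ∀ v : Z d, ‖ℓ • v‖ ^ m * |φ v| = ℓ ^ m * (‖v‖ ^ m * |φ v|) := by
    intro v
    rw [norm_smul, Real.norm_eq_abs, abs_of_pos hℓ, mul_pow]
    ring
  rw [integral_congr_ae (Filter.Eventually.of_forall this), integral_const_mul]
  field_simp

lemma mollifier_moment_integrable (hφ : Continuous φ) (hφs : HasCompactSupport φ)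
    {ℓ : ℝ} (hℓ : 0 < ℓ) (m : ℕ) :
    Integrable (fun w : Z d => ‖w‖ ^ m * |mollifier d φ ℓ w|) volume := by
  refine Continuous.integrable_of_hasCompactSupport ?_ ?_
  · exact ((continuous_norm.pow m)).mul (mollifier_continuous hφ).abs
  · have h1 : HasCompactSupport fun w : Z d => |mollifier d φ ℓ w| := by
      have := (mollifier_compactSupport hφs hℓ).norm
      simpa [Real.norm_eq_abs] using this
    exact h1.mul_left

lemma mollifier_moment_lintegral (hφ : Continuous φ) (hφs : HasCompactSupport φ)
    {ℓ : ℝ} (hℓ : 0 < ℓ) (m : ℕ) :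
    ∫⁻ w : Z d, (‖w‖₊ : ℝ≥0∞) ^ m * (‖mollifier d φ ℓ w‖₊ : ℝ≥0∞)
      = ENNReal.ofReal (ℓ ^ m * ∫ v : Z d, ‖v‖ ^ m * |φ v|) := by
  rw [← mollifier_moment hφ hφs hℓ m]
  rw [ofReal_integral_eq_lintegral_ofReal (mollifier_moment_integrable hφ hφs hℓ m)
    (Filter.Eventually.of_forall fun w => by positivity)]
  refine lintegral_congr fun w => ?_
  rw [ENNReal.ofReal_mul (by positivity), ENNReal.ofReal_pow (norm_nonneg _),
    ofReal_norm_eq_coe_nnnorm]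
  congr 1
  rw [← Real.norm_eq_abs, ofReal_norm_eq_coe_nnnorm]

variable {u ρ : Z d → ℝ}

lemma integrable_shift_mul (hu : Continuous u) {ψ : Z d → ℝ} (hψc : Continuous ψ)
    (hψs : HasCompactSupport ψ) (z : Z d) :
    Integrable (fun w => u (z - w) * ψ w) volume := by
  refine Continuous.integrable_of_hasCompactSupport ?_ hψs.mul_left
  exact (hu.comp (continuous_const.sub continuous_id)).mul hψc

lemma sub_conv (hρc : Continuous ρ) {ψ : Z d → ℝ} (hψc : Continuous ψ)
    (hψs : HasCompactSupport ψ) (hψ1 : ∫ w, ψ w = 1) (z w : Z d) :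
    ρ (z - w) - conv d ψ ρ z = ∫ w', (ρ (z - w) - ρ (z - w')) * ψ w' := by
  have h2 : Integrable (fun w' => ρ (z - w') * ψ w') volume := integrable_shift_mul hρc hψc hψs z
  have h4 : Integrable ψ volume := hψc.integrable_of_hasCompactSupport hψs
  have : ∀ w' : Z d, (ρ (z - w) - ρ (z - w')) * ψ w'
      = ρ (z - w) * ψ w' - ρ (z - w') * ψ w' := fun w' => by ring
  rw [integral_congr_ae (Filter.Eventually.of_forall this),
    integral_sub (h4.const_mul _) h2, integral_const_mul, hψ1]
  unfold conv
  ring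

lemma conv_identity (hu : Continuous u) (hρc : Continuous ρ) {ψ : Z d → ℝ} (hψc : Continuous ψ)
    (hψs : HasCompactSupport ψ) (hψ1 : ∫ w, ψ w = 1) (z : Z d) :
    conv d ψ (fun w => u w * ρ w) z - conv d ψ u z * conv d ψ ρ z
      = ∫ w, (u (z - w) - conv d ψ u z) * (ρ (z - w) - conv d ψ ρ z) * ψ w := by
  set A := conv d ψ u z with hA
  set B := conv d ψ ρ z with hB
  have h1 : Integrable (fun w => u (z - w) * ρ (z - w) * ψ w) volume := by
    refine Continuous.integrable_of_hasCompactSupport ?_ hψs.mul_left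
    exact ((hu.comp (continuous_const.sub continuous_id)).mul
      (hρc.comp (continuous_const.sub continuous_id))).mul hψc
  have h2 : Integrable (fun w => ρ (z - w) * ψ w) volume := integrable_shift_mul hρc hψc hψs z
  have h3 : Integrable (fun w => u (z - w) * ψ w) volume := integrable_shift_mul hu hψc hψs z
  have h4 : Integrable ψ volume := hψc.integrable_of_hasCompactSupport hψs
  have key : ∀ w : Z d, (u (z - w) - A) * (ρ (z - w) - B) * ψ w
      = u (z - w) * ρ (z - w) * ψ w - A * (ρ (z - w) * ψ w)
        - B * (u (z - w) * ψ w) + (A * B) * ψ w := fun w => by ring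
  rw [integral_congr_ae (Filter.Eventually.of_forall key)]
  have h12 : Integrable (fun w => u (z - w) * ρ (z - w) * ψ w - A * (ρ (z - w) * ψ w)) volume :=
    h1.sub (h2.const_mul A)
  have h123 : Integrable (fun w => u (z - w) * ρ (z - w) * ψ w - A * (ρ (z - w) * ψ w)
      - B * (u (z - w) * ψ w)) volume := h12.sub (h3.const_mul B)
  rw [integral_add h123 (h4.const_mul _),
    integral_sub h12 (h3.const_mul B),
    integral_sub h1 (h2.const_mul A), integral_const_mul, integral_const_mul,
    integral_const_mul, hψ1]
  have e1 : ∫ w, u (z - w) * ρ (z - w) * ψ w = conv d ψ (fun w => u w * ρ w) z := rfl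
  have e2 : ∫ w, ρ (z - w) * ψ w = B := rfl
  have e3 : ∫ w, u (z - w) * ψ w = A := rfl
  rw [e1, e2, e3]
  ring


end CET

/-- **Commutator estimate (Constantin–E–Titi type).**  For a space-time mollification
kernel `φ` there is `C = C(φ)` such that for all smooth `u, ρ` (periodic in space) and
all `ℓ > 0`:
`‖(uρ)∗φ_ℓ − (u∗φ_ℓ)(ρ∗φ_ℓ)‖_{L¹} ≤ C ℓ² (‖∂_t u‖_{L¹} + ‖Du‖_{L¹})(‖Dρ‖_{C⁰} + ‖∂_t ρ‖_{C⁰})`,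
where `D` is the spatial gradient and the norms are space-time norms over `ℝ × 𝕋^d`. -/
theorem commutator_estimate (d : ℕ) (hd : 1 ≤ d) (φ : ℝ × Rd d → ℝ)
    (hφsmooth : ContDiff ℝ (⊤ : ℕ∞) φ) (hφsupp : HasCompactSupport φ)
    (hφint : ∫ z : ℝ × Rd d, φ z = 1) :
    ∃ C : ℝ, 0 < C ∧
      ∀ (u ρ : ℝ × Rd d → ℝ), ContDiff ℝ (⊤ : ℕ∞) u → ContDiff ℝ (⊤ : ℕ∞) ρ →
        (∀ t, ZPeriodic fun x => u (t, x)) → (∀ t, ZPeriodic fun x => ρ (t, x)) →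
        ∀ ℓ : ℝ, 0 < ℓ →
          eLpNorm (fun z => conv d (mollifier d φ ℓ) (fun w => u w * ρ w) z
              - conv d (mollifier d φ ℓ) u z * conv d (mollifier d φ ℓ) ρ z) 1 (νST d)
            ≤ ENNReal.ofReal (C * ℓ ^ 2)
              * (eLpNorm (fun z : ℝ × Rd d => deriv (fun s => u (s, z.2)) z.1) 1 (νST d)
                  + eLpNorm (fun z : ℝ × Rd d => fderiv ℝ (fun y => u (z.1, y)) z.2) 1 (νST d))
              * (eLpNorm (fun z : ℝ × Rd d => fderiv ℝ (fun y => ρ (z.1, y)) z.2) ∞ (νST d)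
                  + eLpNorm (fun z : ℝ × Rd d => deriv (fun s => ρ (s, z.2)) z.1) ∞ (νST d)) := by
  classical
  have hφc : Continuous φ := hφsmooth.continuous
  set c₀ : ℝ := ∫ v : CET.Z d, |φ v| with hc0
  set c₁ : ℝ := ∫ v : CET.Z d, ‖v‖ * |φ v| with hc1
  set c₂ : ℝ := ∫ v : CET.Z d, ‖v‖ ^ 2 * |φ v| with hc2
  have hc₀ : 0 ≤ c₀ := integral_nonneg fun v => by positivity
  have hc₁ : 0 ≤ c₁ := integral_nonneg fun v => by positivity
  have hc₂ : 0 ≤ c₂ := integral_nonneg fun v => by positivity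
  set K₀ : ℝ := c₀ ^ 2 * c₂ + 3 * c₀ * c₁ ^ 2 with hK0
  have hK₀ : 0 ≤ K₀ := by positivity
  refine ⟨2 ^ d * K₀ + 1, by positivity, ?_⟩
  intro u ρ hu hρ hpu hpρ ℓ hℓ
  haveI : SigmaFinite (μT d) := by unfold μT; infer_instance
  haveI : SFinite (νST d) := by unfold νST; infer_instance
  set ψ : CET.Z d → ℝ := mollifier d φ ℓ with hψdef
  have hψc : Continuous ψ := CET.mollifier_continuous hφc
  have hψs : HasCompactSupport ψ := CET.mollifier_compactSupport hφsupp hℓ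
  have hψ1 : ∫ w, ψ w = 1 := CET.mollifier_integral hφc hℓ hφint
  have huc : Continuous u := hu.continuous
  have hρc : Continuous ρ := hρ.continuous
  set Nt := eLpNorm (fun z : CET.Z d => deriv (fun s => u (s, z.2)) z.1) 1 (νST d) with hNt
  set Nx := eLpNorm (fun z : CET.Z d => fderiv ℝ (fun y => u (z.1, y)) z.2) 1 (νST d) with hNx
  set Mx := eLpNorm (fun z : CET.Z d => fderiv ℝ (fun y => ρ (z.1, y)) z.2) ∞ (νST d) with hMx
  set Mt := eLpNorm (fun z : CET.Z d => deriv (fun s => ρ (s, z.2)) z.1) ∞ (νST d) with hMt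
  -- measurability of basic pieces
  have mψ : Measurable fun w : CET.Z d => (‖ψ w‖₊ : ℝ≥0∞) :=
    (ENNReal.continuous_coe.comp (continuous_nnnorm.comp hψc)).measurable
  have mw : Measurable fun w : CET.Z d => (‖w‖₊ : ℝ≥0∞) :=
    (ENNReal.continuous_coe.comp continuous_nnnorm).measurable
  -- kernel moments
  set I₀ : ℝ≥0∞ := ∫⁻ w : CET.Z d, (‖ψ w‖₊ : ℝ≥0∞) with hI0def
  set I₁ : ℝ≥0∞ := ∫⁻ w : CET.Z d, (‖w‖₊ : ℝ≥0∞) * (‖ψ w‖₊ : ℝ≥0∞) with hI1def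
  have hI0 : I₀ = ENNReal.ofReal c₀ := by
    have h := CET.mollifier_moment_lintegral (d := d) hφc hφsupp hℓ 0
    rw [← hψdef] at h
    simp only [pow_zero, one_mul] at h
    rw [hI0def, h]
  have hI1 : I₁ = ENNReal.ofReal (ℓ * c₁) := by
    have h := CET.mollifier_moment_lintegral (d := d) hφc hφsupp hℓ 1
    rw [← hψdef] at h
    simp only [pow_one] at h
    rw [hI1def, h]
  have hI2 : (∫⁻ w : CET.Z d, (‖w‖₊ : ℝ≥0∞) ^ 2 * (‖ψ w‖₊ : ℝ≥0∞))
      = ENNReal.ofReal (ℓ ^ 2 * c₂) := by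
    have h := CET.mollifier_moment_lintegral (d := d) hφc hφsupp hℓ 2
    rw [← hψdef] at h
    exact h
  have hI0top : I₀ ≠ ⊤ := by rw [hI0]; exact ENNReal.ofReal_ne_top
  have hI1top : I₁ ≠ ⊤ := by rw [hI1]; exact ENNReal.ofReal_ne_top
  set B : CET.Z d → ℝ≥0∞ := fun w => (‖w‖₊ : ℝ≥0∞) * I₀ + I₁ with hBdef
  have mB : Measurable B := (mw.mul_const _).add_const _
  -- the ρ-factor bound
  have hstepD : ∀ z w : CET.Z d, (‖ρ (z - w) - conv d ψ ρ z‖₊ : ℝ≥0∞) ≤ (Mx + Mt) * B w := by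
    intro z w
    rw [CET.sub_conv hρc hψc hψs hψ1 z w]
    calc (‖∫ w', (ρ (z - w) - ρ (z - w')) * ψ w'‖₊ : ℝ≥0∞)
        ≤ ∫⁻ w', (‖(ρ (z - w) - ρ (z - w')) * ψ w'‖₊ : ℝ≥0∞) :=
          enorm_integral_le_lintegral_enorm _
      _ ≤ ∫⁻ w', ((Mx + Mt) * ((‖w‖₊ : ℝ≥0∞) + (‖w'‖₊ : ℝ≥0∞))) * (‖ψ w'‖₊ : ℝ≥0∞) := by
          refine lintegral_mono fun w' => ?_
          rw [nnnorm_mul, ENNReal.coe_mul]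
          refine mul_le_mul_left ?_ _
          refine (CET.lip_bound hρ hpρ (z - w) (z - w')).trans ?_
          rw [← hMx, ← hMt]
          refine mul_le_mul_right ?_ _
          have h1 : z - w - (z - w') = w' - w := by abel
          rw [h1]
          calc ((‖w' - w‖₊ : ℝ≥0∞)) ≤ ((‖w'‖₊ + ‖w‖₊ : ℝ≥0) : ℝ≥0∞) :=
                ENNReal.coe_mono (nnnorm_sub_le _ _)
            _ = (‖w‖₊ : ℝ≥0∞) + (‖w'‖₊ : ℝ≥0∞) := by rw [ENNReal.coe_add, add_comm]
      _ = (Mx + Mt) * ∫⁻ w', ((‖w‖₊ : ℝ≥0∞) + (‖w'‖₊ : ℝ≥0∞)) * (‖ψ w'‖₊ : ℝ≥0∞) := by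
          rw [← lintegral_const_mul _ ((measurable_const.fun_add mw).fun_mul mψ)]
          · refine lintegral_congr fun w' => ?_
            ring
      _ = (Mx + Mt) * B w := by
          congr 1
          have : ∀ w' : CET.Z d, ((‖w‖₊ : ℝ≥0∞) + (‖w'‖₊ : ℝ≥0∞)) * (‖ψ w'‖₊ : ℝ≥0∞)
              = (‖w‖₊ : ℝ≥0∞) * (‖ψ w'‖₊ : ℝ≥0∞) + (‖w'‖₊ : ℝ≥0∞) * (‖ψ w'‖₊ : ℝ≥0∞) :=
            fun w' => by ring
          rw [lintegral_congr this, lintegral_add_left (mψ.const_mul _),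
            lintegral_const_mul _ mψ, hBdef]
  -- the u-factor: set Q
  set Q : CET.Z d → CET.Z d → ℝ≥0∞ := fun z w =>
    ∫⁻ w'', (‖u (z - w) - u (z - w'')‖₊ : ℝ≥0∞) * (‖ψ w''‖₊ : ℝ≥0∞) with hQdef
  have hstepE : ∀ z w : CET.Z d, (‖u (z - w) - conv d ψ u z‖₊ : ℝ≥0∞) ≤ Q z w := by
    intro z w
    rw [CET.sub_conv huc hψc hψs hψ1 z w]
    calc (‖∫ w', (u (z - w) - u (z - w')) * ψ w'‖₊ : ℝ≥0∞)
        ≤ ∫⁻ w', (‖(u (z - w) - u (z - w')) * ψ w'‖₊ : ℝ≥0∞) :=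
          enorm_integral_le_lintegral_enorm _
      _ = Q z w := by
          refine lintegral_congr fun w' => ?_
          rw [nnnorm_mul, ENNReal.coe_mul]
  -- pointwise commutator bound
  have hpoint : ∀ z : CET.Z d,
      (‖conv d ψ (fun w => u w * ρ w) z - conv d ψ u z * conv d ψ ρ z‖₊ : ℝ≥0∞)
        ≤ ∫⁻ w, Q z w * ((Mx + Mt) * B w * (‖ψ w‖₊ : ℝ≥0∞)) := by
    intro z
    rw [CET.conv_identity huc hρc hψc hψs hψ1 z]
    calc (‖∫ w, (u (z - w) - conv d ψ u z) * (ρ (z - w) - conv d ψ ρ z) * ψ w‖₊ : ℝ≥0∞)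
        ≤ ∫⁻ w, (‖(u (z - w) - conv d ψ u z) * (ρ (z - w) - conv d ψ ρ z) * ψ w‖₊ : ℝ≥0∞) :=
          enorm_integral_le_lintegral_enorm _
      _ ≤ ∫⁻ w, Q z w * ((Mx + Mt) * B w * (‖ψ w‖₊ : ℝ≥0∞)) := by
          refine lintegral_mono fun w => ?_
          rw [nnnorm_mul, nnnorm_mul, ENNReal.coe_mul, ENNReal.coe_mul]
          calc ((‖u (z - w) - conv d ψ u z‖₊ : ℝ≥0∞) * (‖ρ (z - w) - conv d ψ ρ z‖₊ : ℝ≥0∞))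
                * (‖ψ w‖₊ : ℝ≥0∞)
              ≤ (Q z w * ((Mx + Mt) * B w)) * (‖ψ w‖₊ : ℝ≥0∞) :=
                mul_le_mul_left (mul_le_mul' (hstepE z w) (hstepD z w)) _
            _ = Q z w * ((Mx + Mt) * B w * (‖ψ w‖₊ : ℝ≥0∞)) := by ring
  -- measurability of Q
  have mq : Measurable (fun p : (CET.Z d × CET.Z d) × CET.Z d =>
      (‖u (p.1.1 - p.1.2) - u (p.1.1 - p.2)‖₊ : ℝ≥0∞) * (‖ψ p.2‖₊ : ℝ≥0∞)) := by
    refine Measurable.fun_mul ?_ ?_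
    · exact ((huc.measurable.comp ((measurable_fst.comp measurable_fst).sub
        (measurable_snd.comp measurable_fst))).sub
        (huc.measurable.comp ((measurable_fst.comp measurable_fst).sub
          measurable_snd))).enorm
    · exact (hψc.measurable.comp measurable_snd).enorm
  have mQ : Measurable fun p : CET.Z d × CET.Z d => Q p.1 p.2 := by
    have := mq.lintegral_prod_right' (ν := (volume : Measure (CET.Z d)))
    exact this
  -- the z-integral of Q
  have hQint : ∀ w : CET.Z d, ∫⁻ z, Q z w ∂(νST d) ≤ 2 ^ d * (Nt + Nx) * B w := by
    intro w
    have hswap : ∫⁻ z, Q z w ∂(νST d)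
        = ∫⁻ w'', (∫⁻ z, (‖u (z - w) - u (z - w'')‖₊ : ℝ≥0∞) ∂(νST d))
            * (‖ψ w''‖₊ : ℝ≥0∞) ∂volume := by
      rw [hQdef]
      simp only
      rw [lintegral_lintegral_swap]
      · refine lintegral_congr fun w'' => ?_
        exact lintegral_mul_const' _ _ ENNReal.coe_ne_top
      · apply Measurable.aemeasurable
        refine Measurable.fun_mul ?_ ?_
        · exact ((huc.measurable.comp (measurable_fst.sub measurable_const)).sub
            (huc.measurable.comp (measurable_fst.sub measurable_snd))).enorm
        · exact (hψc.measurable.comp measurable_snd).enorm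
    rw [hswap]
    calc ∫⁻ w'', (∫⁻ z, (‖u (z - w) - u (z - w'')‖₊ : ℝ≥0∞) ∂(νST d))
            * (‖ψ w''‖₊ : ℝ≥0∞) ∂volume
        ≤ ∫⁻ w'', (2 ^ d * (Nt + Nx) * ((‖w‖₊ : ℝ≥0∞) + (‖w''‖₊ : ℝ≥0∞)))
            * (‖ψ w''‖₊ : ℝ≥0∞) ∂volume := by
          refine lintegral_mono fun w'' => ?_
          refine mul_le_mul_left ?_ _
          refine (CET.shift_diff_bound hu hpu w w'').trans ?_
          rw [← hNt, ← hNx]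
          refine mul_le_mul_right ?_ _
          calc ((‖w - w''‖₊ : ℝ≥0∞)) ≤ ((‖w‖₊ + ‖w''‖₊ : ℝ≥0) : ℝ≥0∞) :=
                ENNReal.coe_mono (nnnorm_sub_le _ _)
            _ = (‖w‖₊ : ℝ≥0∞) + (‖w''‖₊ : ℝ≥0∞) := by rw [ENNReal.coe_add]
      _ = 2 ^ d * (Nt + Nx) * ∫⁻ w'', ((‖w‖₊ : ℝ≥0∞) + (‖w''‖₊ : ℝ≥0∞))
            * (‖ψ w''‖₊ : ℝ≥0∞) ∂volume := by
          rw [← lintegral_const_mul _ ((measurable_const.fun_add mw).fun_mul mψ)]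
          · refine lintegral_congr fun w'' => ?_
            ring
      _ = 2 ^ d * (Nt + Nx) * B w := by
          congr 1
          have : ∀ w'' : CET.Z d, ((‖w‖₊ : ℝ≥0∞) + (‖w''‖₊ : ℝ≥0∞)) * (‖ψ w''‖₊ : ℝ≥0∞)
              = (‖w‖₊ : ℝ≥0∞) * (‖ψ w''‖₊ : ℝ≥0∞) + (‖w''‖₊ : ℝ≥0∞) * (‖ψ w''‖₊ : ℝ≥0∞) :=
            fun w'' => by ring
          rw [lintegral_congr this, lintegral_add_left (mψ.const_mul _),
            lintegral_const_mul _ mψ, hBdef]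
  -- kernel quadratic moment
  have hBB : (∫⁻ w : CET.Z d, B w * B w * (‖ψ w‖₊ : ℝ≥0∞))
      = ENNReal.ofReal (ℓ ^ 2 * K₀) := by
    have hexp : ∀ w : CET.Z d, B w * B w * (‖ψ w‖₊ : ℝ≥0∞)
        = I₀ * I₀ * ((‖w‖₊ : ℝ≥0∞) ^ 2 * (‖ψ w‖₊ : ℝ≥0∞))
          + 2 * I₀ * I₁ * ((‖w‖₊ : ℝ≥0∞) * (‖ψ w‖₊ : ℝ≥0∞))
          + I₁ * I₁ * (‖ψ w‖₊ : ℝ≥0∞) := by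
      intro w
      rw [hBdef]
      ring
    rw [lintegral_congr hexp]
    have m1 : Measurable fun w : CET.Z d => I₀ * I₀ * ((‖w‖₊ : ℝ≥0∞) ^ 2 * (‖ψ w‖₊ : ℝ≥0∞)) :=
      ((mw.pow_const 2).mul mψ).const_mul _
    have m2 : Measurable fun w : CET.Z d => 2 * I₀ * I₁ * ((‖w‖₊ : ℝ≥0∞) * (‖ψ w‖₊ : ℝ≥0∞)) :=
      (mw.mul mψ).const_mul _
    rw [lintegral_add_left (m1.fun_add m2), lintegral_add_left m1,
      lintegral_const_mul _ ((mw.pow_const 2).fun_mul mψ),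
      lintegral_const_mul _ (mw.fun_mul mψ),
      lintegral_const_mul _ mψ]
    rw [hI2, ← hI1def, ← hI0def, hI0, hI1]
    have hl : (0:ℝ) ≤ ℓ := hℓ.le
    have hlc1 : (0:ℝ) ≤ ℓ * c₁ := mul_nonneg hl hc₁
    have t1 : ENNReal.ofReal c₀ * ENNReal.ofReal c₀ * ENNReal.ofReal (ℓ ^ 2 * c₂)
        = ENNReal.ofReal (c₀ * c₀ * (ℓ ^ 2 * c₂)) := by
      rw [← ENNReal.ofReal_mul hc₀, ← ENNReal.ofReal_mul (mul_nonneg hc₀ hc₀)]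
    have t2 : 2 * ENNReal.ofReal c₀ * ENNReal.ofReal (ℓ * c₁) * ENNReal.ofReal (ℓ * c₁)
        = ENNReal.ofReal (2 * c₀ * (ℓ * c₁) * (ℓ * c₁)) := by
      rw [show (2 : ℝ≥0∞) = ENNReal.ofReal 2 by norm_num,
        ← ENNReal.ofReal_mul (by norm_num : (0:ℝ) ≤ 2),
        ← ENNReal.ofReal_mul (mul_nonneg (by norm_num : (0:ℝ) ≤ 2) hc₀),
        ← ENNReal.ofReal_mul (mul_nonneg (mul_nonneg (by norm_num : (0:ℝ) ≤ 2) hc₀) hlc1)]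
    have t3 : ENNReal.ofReal (ℓ * c₁) * ENNReal.ofReal (ℓ * c₁) * ENNReal.ofReal c₀
        = ENNReal.ofReal ((ℓ * c₁) * (ℓ * c₁) * c₀) := by
      rw [← ENNReal.ofReal_mul hlc1, ← ENNReal.ofReal_mul (mul_nonneg hlc1 hlc1)]
    rw [t1, t2, t3,
      ← ENNReal.ofReal_add (mul_nonneg (mul_nonneg hc₀ hc₀) (mul_nonneg (by positivity) hc₂))
        (by positivity),
      ← ENNReal.ofReal_add (by positivity) (mul_nonneg (mul_nonneg hlc1 hlc1) hc₀)]
    congr 1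
    rw [hK0]
    ring
  -- the grand chain
  rw [eLpNorm_one_eq_lintegral_enorm]
  calc ∫⁻ z, (‖conv d ψ (fun w => u w * ρ w) z - conv d ψ u z * conv d ψ ρ z‖₊ : ℝ≥0∞) ∂(νST d)
      ≤ ∫⁻ z, ∫⁻ w, Q z w * ((Mx + Mt) * B w * (‖ψ w‖₊ : ℝ≥0∞)) ∂volume ∂(νST d) :=
        lintegral_mono hpoint
    _ = ∫⁻ w, ∫⁻ z, Q z w * ((Mx + Mt) * B w * (‖ψ w‖₊ : ℝ≥0∞)) ∂(νST d) ∂volume := by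
        refine lintegral_lintegral_swap ?_
        apply Measurable.aemeasurable
        exact mQ.mul (((mB.comp measurable_snd).const_mul _).mul (mψ.comp measurable_snd))
    _ = ∫⁻ w, (∫⁻ z, Q z w ∂(νST d)) * ((Mx + Mt) * B w * (‖ψ w‖₊ : ℝ≥0∞)) ∂volume := by
        refine lintegral_congr fun w => ?_
        exact lintegral_mul_const _ (mQ.comp (measurable_id.prodMk measurable_const) : _)
    _ ≤ ∫⁻ w, (2 ^ d * (Nt + Nx) * B w) * ((Mx + Mt) * B w * (‖ψ w‖₊ : ℝ≥0∞)) ∂volume := by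
        refine lintegral_mono fun w => mul_le_mul_left (hQint w) _
    _ = (2 ^ d * (Nt + Nx) * (Mx + Mt)) * ∫⁻ w, B w * B w * (‖ψ w‖₊ : ℝ≥0∞) ∂volume := by
        rw [← lintegral_const_mul _ ((mB.fun_mul mB).fun_mul mψ)]
        refine lintegral_congr fun w => ?_
        ring
    _ = (2 ^ d * (Nt + Nx) * (Mx + Mt)) * ENNReal.ofReal (ℓ ^ 2 * K₀) := by rw [hBB]
    _ ≤ ENNReal.ofReal ((2 ^ d * K₀ + 1) * ℓ ^ 2) * (Nt + Nx) * (Mx + Mt) := by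
        have h2d : (2 : ℝ≥0∞) ^ d = ENNReal.ofReal (2 ^ d) := by
          rw [ENNReal.ofReal_pow (by norm_num)]
          norm_num
        calc (2 ^ d * (Nt + Nx) * (Mx + Mt)) * ENNReal.ofReal (ℓ ^ 2 * K₀)
            = (ENNReal.ofReal (2 ^ d) * ENNReal.ofReal (ℓ ^ 2 * K₀)) * (Nt + Nx) * (Mx + Mt) := by
              rw [h2d]; ring
          _ = ENNReal.ofReal (2 ^ d * (ℓ ^ 2 * K₀)) * (Nt + Nx) * (Mx + Mt) := by
              rw [← ENNReal.ofReal_mul (by positivity)]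
          _ ≤ ENNReal.ofReal ((2 ^ d * K₀ + 1) * ℓ ^ 2) * (Nt + Nx) * (Mx + Mt) := by
              refine mul_le_mul_left (mul_le_mul_left (ENNReal.ofReal_le_ofReal ?_) _) _
              have hl2 : (0:ℝ) ≤ ℓ ^ 2 := by positivity
              nlinarith
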